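/- arXiv:1106.0481 — 2 statements merged into one kernel-verified Lean document; each statement's English description precedes it below -/
import Mathlib

section
/- For all nonnegative integers r and m, the r-th Taylor coefficient at α = 1 of the function α ↦ 1/(2-α)_{m+1} equals S*_m(1,...,1)/(m+1)!, where S*_m has r arguments equal to 1; that is, (1/r!) (d^r/dα^r) [1/(2-α)_{m+1}] evaluated at α = 1 equals S*_m(1,...,1)/(m+1)!. -/
open scoped BigOperators

/-- Finite multiple harmonic star sum
`S*_m(k₁,…,kₙ) = ∑_{0 ≤ m₁ ≤ ⋯ ≤ mₙ ≤ m} 1/((m₁+1)^{k₁} ⋯ (mₙ+1)^{kₙ})`. -/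
noncomputable def SmStar (m : ℕ) (k : List ℕ) : ℝ :=
  ∑' t : Fin k.length → ℕ,
    if (∀ i, t i ≤ m) ∧ (∀ i j : Fin k.length, i ≤ j → t i ≤ t j) then
      ∏ i, (((t i : ℝ) + 1) ^ (k.get i))⁻¹
    else 0

/-!
In the variable `x = α - 1` the function is `∏_{j=1}^{m+1} (j - x)⁻¹`, a product of geometric
series `∑_k x^k / j^(k+1)`. Its `r`-th Taylor coefficient is therefore `1/(m+1)!` times the
complete homogeneous symmetric polynomial `h_r(1, 1/2, …, 1/(m+1))`, which is `S*_m({1}^r)`.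
Both sides are computed by induction on `m`: Leibniz' rule turns the extra factor
`(m + 2 - x)⁻¹` into a convolution with the powers of `(m + 2)⁻¹`, and on the combinatorial side
the same convolution comes from splitting off the last entry of a nondecreasing tuple.
-/

open Finset Nat

theorem Fin.monotone_snoc_iff {n : ℕ} {α : Type*} [Preorder α] {s : Fin n → α} {a : α} :
    Monotone (Fin.snoc s a : Fin (n + 1) → α) ↔ Monotone s ∧ ∀ i, s i ≤ a := by
  refine ⟨fun h => ⟨fun i j hij => ?_, fun i => ?_⟩, fun ⟨hs, ha⟩ i j hij => ?_⟩
  · simpa using h (Fin.castSucc_le_castSucc_iff.2 hij)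
  · simpa using h (Fin.le_last i.castSucc)
  · rcases Fin.eq_castSucc_or_eq_last j with ⟨j, rfl⟩ | rfl
    · rcases Fin.eq_castSucc_or_eq_last i with ⟨i, rfl⟩ | rfl
      · simpa using hs (Fin.castSucc_le_castSucc_iff.1 hij)
      · exact absurd hij (Fin.castSucc_lt_last j).not_ge
    · rcases Fin.eq_castSucc_or_eq_last i with ⟨i, rfl⟩ | rfl
      · simpa using ha i
      · simp

noncomputable def smStarOnes (r m : ℕ) : ℝ :=
  ∑ t ∈ {t ∈ Fintype.piFinset fun _ : Fin r => range (m + 1) | Monotone t},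
    ∏ i, ((t i : ℝ) + 1)⁻¹

theorem mem_filter_monotone_piFinset {r m : ℕ} {t : Fin r → ℕ} :
    t ∈ {t ∈ Fintype.piFinset fun _ : Fin r => range (m + 1) | Monotone t} ↔
      Monotone t ∧ ∀ i, t i ≤ m := by
  simp [and_comm]

theorem smStarOnes_zero_left (m : ℕ) : smStarOnes 0 m = 1 := by
  simp [smStarOnes, Subsingleton.monotone]

theorem smStarOnes_succ_left (r m : ℕ) :
    smStarOnes (r + 1) m = ∑ j ∈ range (m + 1), ((j : ℝ) + 1)⁻¹ * smStarOnes r j := by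
  simp_rw [smStarOnes, mul_sum]
  rw [sum_sigma']
  refine sum_nbij' (fun t => ⟨t (Fin.last r), Fin.init t⟩) (fun p => Fin.snoc p.2 p.1)
    ?_ ?_ (fun t _ => Fin.snoc_init_self t) (fun p _ => by simp) ?_
  · intro t ht
    rw [mem_filter_monotone_piFinset] at ht
    have hsnoc : Monotone (Fin.snoc (Fin.init t) (t (Fin.last r))) := by
      rw [Fin.snoc_init_self]; exact ht.1
    simp only [mem_sigma, mem_range, mem_filter_monotone_piFinset]
    exact ⟨Nat.lt_succ_of_le (ht.2 _), Fin.monotone_snoc_iff.1 hsnoc⟩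
  · rintro ⟨j, s⟩ hp
    simp only [mem_sigma, mem_range, mem_filter_monotone_piFinset] at hp
    rw [mem_filter_monotone_piFinset, Fin.monotone_snoc_iff]
    refine ⟨⟨hp.2.1, hp.2.2⟩, fun i => ?_⟩
    rcases Fin.eq_castSucc_or_eq_last i with ⟨i, rfl⟩ | rfl
    · simpa using (hp.2.2 i).trans (by omega)
    · simpa using (by omega : j ≤ m)
  · intro t _
    rw [Fin.prod_univ_castSucc, mul_comm]
    rfl

theorem smStarOnes_succ_succ (r m : ℕ) :
    smStarOnes (r + 1) (m + 1) =
      smStarOnes (r + 1) m + ((m : ℝ) + 2)⁻¹ * smStarOnes r (m + 1) := by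
  rw [smStarOnes_succ_left, smStarOnes_succ_left, sum_range_succ]
  push_cast
  ring

theorem smStarOnes_zero_right (r : ℕ) : smStarOnes r 0 = 1 := by
  induction r with
  | zero => exact smStarOnes_zero_left 0
  | succ r ih => simp [smStarOnes_succ_left, ih]

theorem smStarOnes_succ_right (r m : ℕ) :
    smStarOnes r (m + 1) =
      ∑ p ∈ antidiagonal r, smStarOnes p.1 m * ((m : ℝ) + 2)⁻¹ ^ p.2 := by
  induction r with
  | zero => simp [smStarOnes_zero_left]
  | succ r ih =>
    rw [smStarOnes_succ_succ, ih, Nat.sum_antidiagonal_succ', mul_sum]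
    simp only [pow_zero, mul_one, pow_succ]
    congr 1
    exact sum_congr rfl fun p _ => by ring

theorem SmStar_of_forall_get_eq_one {m : ℕ} {k : List ℕ} (hk : ∀ i, k.get i = 1) :
    SmStar m k = smStarOnes k.length m := by
  rw [SmStar, smStarOnes,
    tsum_eq_sum (s := {t ∈ Fintype.piFinset fun _ => range (m + 1) | Monotone t})]
  · refine sum_congr rfl fun t ht => ?_
    rw [mem_filter_monotone_piFinset] at ht
    simp only [hk, pow_one]
    exact if_pos ⟨ht.2, fun i j hij => ht.1 hij⟩
  · intro t ht
    rw [mem_filter_monotone_piFinset] at ht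
    exact if_neg fun h => ht ⟨fun i j hij => h.2 i j hij, h.1⟩

theorem SmStar_replicate_one (r m : ℕ) : SmStar m (List.replicate r 1) = smStarOnes r m := by
  rw [SmStar_of_forall_get_eq_one (by simp), List.length_replicate]

theorem taylorCoeffWithin_mul {𝔸 : Type*} [NormedRing 𝔸] [NormedAlgebra ℝ 𝔸] {f g : ℝ → 𝔸}
    {s : Set ℝ} {x : ℝ} {n : ℕ} (hx : x ∈ s) (hs : UniqueDiffOn ℝ s)
    (hf : ContDiffWithinAt ℝ n f s x) (hg : ContDiffWithinAt ℝ n g s x) :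
    taylorCoeffWithin (f * g) n s x =
      ∑ p ∈ antidiagonal n, taylorCoeffWithin f p.1 s x * taylorCoeffWithin g p.2 s x := by
  rw [taylorCoeffWithin, iteratedDerivWithin_mul hx hs hf hg,
    Nat.sum_antidiagonal_eq_sum_range_succ_mk, smul_sum]
  refine sum_congr rfl fun i hi => ?_
  have hin : i ≤ n := Nat.le_of_lt_succ (mem_range.1 hi)
  have hfac : ((n ! : ℝ))⁻¹ * n.choose i = (i ! : ℝ)⁻¹ * ((n - i)! : ℝ)⁻¹ := by
    have := (Nat.choose_pos hin).ne'
    rw [← Nat.choose_mul_factorial_mul_factorial hin]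
    push_cast
    field_simp
  simp only [taylorCoeffWithin, smul_mul_smul, ← hfac, mul_smul, mul_assoc,
    Nat.cast_smul_eq_nsmul, nsmul_eq_mul]

theorem taylorCoeffWithin_univ_inv_const_sub (c a : ℝ) (k : ℕ) :
    taylorCoeffWithin (fun x => (c - x)⁻¹) k Set.univ a = (c - a)⁻¹ ^ (k + 1) := by
  have hlin : (fun x : ℝ => (c - x)⁻¹) = fun x => (-1 * x + c)⁻¹ := by
    funext x; ring_nf
  have hzpow : (c - a) ^ (-1 - k : ℤ) = (c - a)⁻¹ ^ (k + 1) := by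
    rw [show (-1 - k : ℤ) = -((k + 1 : ℕ) : ℤ) by push_cast; ring, zpow_neg, zpow_natCast, inv_pow]
  rw [taylorCoeffWithin, iteratedDerivWithin_univ, iteratedDeriv_eq_iterate, hlin,
    iter_deriv_inv_linear, smul_eq_mul]
  dsimp only
  rw [show (-1 : ℝ) * a + c = c - a by ring, hzpow]
  have hsign : ((-1 : ℝ) ^ k) * (-1) ^ k = 1 := by rw [← mul_pow]; norm_num
  field_simp
  linear_combination (c - a)⁻¹ ^ (k + 1) * hsign

noncomputable def recipPochhammer (m : ℕ) (α : ℝ) : ℝ :=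
  (Polynomial.eval (2 - α) (ascPochhammer ℝ (m + 1)))⁻¹

theorem recipPochhammer_zero : recipPochhammer 0 = fun α => (2 - α)⁻¹ := by
  funext α
  simp [recipPochhammer]

theorem recipPochhammer_succ (m : ℕ) :
    recipPochhammer (m + 1) = recipPochhammer m * fun α => ((m : ℝ) + 3 - α)⁻¹ := by
  funext α
  rw [Pi.mul_apply, recipPochhammer, recipPochhammer, ascPochhammer_succ_eval, mul_inv]
  push_cast
  ring_nf

theorem contDiffAt_recipPochhammer (m : ℕ) {α : ℝ} (hα : α < 2) (n : WithTop ℕ∞) :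
    ContDiffAt ℝ n (recipPochhammer m) α := by
  have hpoly : ContDiff ℝ n fun α : ℝ => (ascPochhammer ℝ (m + 1)).eval (2 - α) :=
    (Polynomial.contDiff_aeval _ n).comp (contDiff_const.sub contDiff_id)
  exact hpoly.contDiffAt.inv (ascPochhammer_pos _ _ (by linarith)).ne'

theorem taylorCoeffWithin_recipPochhammer (r m : ℕ) :
    taylorCoeffWithin (recipPochhammer m) r Set.univ 1 = smStarOnes r m / (m + 1)! := by
  induction m generalizing r with
  | zero =>
    norm_num [recipPochhammer_zero, taylorCoeffWithin_univ_inv_const_sub, smStarOnes_zero_right]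
  | succ m ih =>
    have hf := (contDiffAt_recipPochhammer m one_lt_two r).contDiffWithinAt (s := Set.univ)
    have hg : ContDiffWithinAt ℝ r (fun α : ℝ => ((m : ℝ) + 3 - α)⁻¹) Set.univ 1 :=
      ((contDiffAt_const.sub contDiffAt_id).inv
        (by norm_num [add_sub_assoc]; positivity)).contDiffWithinAt
    rw [recipPochhammer_succ, taylorCoeffWithin_mul (Set.mem_univ 1) uniqueDiffOn_univ hf hg,
      smStarOnes_succ_right, sum_div]
    refine sum_congr rfl fun p _ => ?_
    rw [ih, taylorCoeffWithin_univ_inv_const_sub, factorial_succ (m + 1),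
      show (m : ℝ) + 3 - 1 = m + 2 by ring]
    push_cast
    simp only [div_eq_mul_inv, mul_inv, pow_succ]
    ring

/-- For all `r, m ≥ 0`, the `r`-th Taylor coefficient at `α = 1` of
`α ↦ 1/(2-α)_{m+1}` equals `S*_m({1}^r)/(m+1)!`. -/
theorem stmt6 (r m : ℕ) :
    ((r.factorial : ℝ))⁻¹ *
      iteratedDeriv r (fun α : ℝ => (Polynomial.eval (2 - α) (ascPochhammer ℝ (m + 1)))⁻¹) 1 =
    SmStar m (List.replicate r 1) / (m + 1).factorial := by
  have h := taylorCoeffWithin_recipPochhammer r m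
  rw [taylorCoeffWithin, iteratedDerivWithin_univ, smul_eq_mul, ← SmStar_replicate_one] at h
  exact h
end

section
/- For every nonnegative integer m and every complex number α, the identity (α)_m/(2-α)_{m+1} = (1/(2-α+m)) ∑_{i=0}^{m} 2^i ∑_{0 ≤ m_1 < ... < m_i < m} ∏_{j=1}^{i} (α-1)/(2-α+m_j) holds (as an identity of rational functions, valid whenever 2-α+k ≠ 0 for all integers 0 ≤ k ≤ m). -/
/-!
Put `x k = (α - 1) / (2 - α + k)`. Grouping the subsets `{m₁ < ⋯ < mᵢ}` of `{0, …, m - 1}` by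
size, the double sum is the subset expansion of `∏_{k < m} (1 + 2 x k)`, and
`1 + 2 x k = (α + k) / (2 - α + k)`, so this product is `(α)_m / (2 - α)_m`.
-/

open Finset

theorem ascPochhammer_eval_eq_prod_range {R : Type*} [CommSemiring R] (x : R) (n : ℕ) :
    (ascPochhammer R n).eval x = ∏ k ∈ range n, (x + k) := by
  induction n with
  | zero => simp
  | succ n ih => rw [ascPochhammer_succ_eval, ih, prod_range_succ]

theorem sum_strictMono_piFinset_eq_sum_powersetCard {α M : Type*} [LinearOrder α]
    [AddCommMonoid M] (s : Finset α) (i : ℕ) (f : Finset α → M) :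
    ∑ t ∈ (Fintype.piFinset fun _ : Fin i => s) with StrictMono t, f (univ.image t) =
      ∑ u ∈ s.powersetCard i, f u := by
  have card_image {t : Fin i → α} (ht : StrictMono t) : #(univ.image t) = i := by
    rw [card_image_of_injective _ ht.injective, card_univ, Fintype.card_fin]
  refine sum_bij' (fun t _ => univ.image t)
    (fun u hu => u.orderEmbOfFin (mem_powersetCard.mp hu).2) ?_ ?_ ?_ ?_ (fun _ _ => rfl)
  · intro t ht
    simp only [mem_filter, Fintype.mem_piFinset] at ht
    exact mem_powersetCard.mpr ⟨image_subset_iff.mpr fun j _ => ht.1 j, card_image ht.2⟩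
  · intro u hu
    simp only [mem_filter, Fintype.mem_piFinset]
    exact ⟨fun j => (mem_powersetCard.mp hu).1 (u.orderEmbOfFin_mem _ j),
      (u.orderEmbOfFin _).strictMono⟩
  · intro t ht
    have ht := (mem_filter.mp ht).2
    exact funext fun j => congrFun (orderEmbOfFin_unique (card_image ht)
      (fun j => mem_image_of_mem t (mem_univ j)) ht).symm j
  · intro u hu
    apply coe_injective
    simp

theorem tsum_ite_strictMono_prod_eq_sum_powersetCard {R : Type*} [CommSemiring R]
    [TopologicalSpace R] (i m : ℕ) (x : ℕ → R) :
    (∑' t : Fin i → ℕ,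
        if (∀ j, t j < m) ∧ (∀ j l : Fin i, j < l → t j < t l) then ∏ j, x (t j) else 0) =
      ∑ u ∈ (range m).powersetCard i, ∏ k ∈ u, x k := by
  classical
  rw [← sum_strictMono_piFinset_eq_sum_powersetCard,
    tsum_eq_sum (s := {t ∈ Fintype.piFinset fun _ => range m | StrictMono t})]
  · refine sum_congr rfl fun t ht => ?_
    simp only [mem_filter, Fintype.mem_piFinset, mem_range] at ht
    rw [if_pos ⟨ht.1, fun j l => @ht.2 j l⟩, prod_image fun j _ l _ h => ht.2.injective h]
  · intro t ht
    simp only [mem_filter, Fintype.mem_piFinset, mem_range] at ht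
    exact if_neg fun h => ht ⟨h.1, fun j l => h.2 j l⟩

theorem sum_pow_mul_sum_powersetCard_eq_prod_one_add {ι R : Type*} [CommSemiring R]
    (s : Finset ι) (c : R) (x : ι → R) :
    ∑ i ∈ range (#s + 1), c ^ i * ∑ t ∈ s.powersetCard i, ∏ k ∈ t, x k =
      ∏ k ∈ s, (1 + c * x k) := by
  rw [prod_one_add, sum_powerset]
  refine sum_congr rfl fun i _ => ?_
  rw [mul_sum]
  refine sum_congr rfl fun t ht => ?_
  rw [prod_mul_distrib, prod_const, (mem_powersetCard.mp ht).2]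

/-- For every `m ≥ 0` and `α ∈ ℂ` with `2-α+k ≠ 0` for `0 ≤ k ≤ m`,
`(α)_m/(2-α)_{m+1} = (1/(2-α+m)) ∑_{i=0}^{m} 2^i ∑_{0≤m₁<⋯<m_i<m} ∏_j (α-1)/(2-α+m_j)`. -/
theorem stmt8 (m : ℕ) (α : ℂ) (h : ∀ k : ℕ, k ≤ m → 2 - α + (k : ℂ) ≠ 0) :
    Polynomial.eval α (ascPochhammer ℂ m) /
        Polynomial.eval (2 - α) (ascPochhammer ℂ (m + 1)) =
      (2 - α + (m : ℂ))⁻¹ *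
        ∑ i ∈ Finset.range (m + 1), 2 ^ i *
          ∑' t : Fin i → ℕ,
            if (∀ j, t j < m) ∧ (∀ j l : Fin i, j < l → t j < t l) then
              ∏ j, (α - 1) / (2 - α + (t j : ℂ))
            else 0 := by
  have factor (k : ℕ) (hk : k ∈ range m) :
      1 + 2 * ((α - 1) / (2 - α + k)) = (α + k) / (2 - α + k) := by
    field_simp [h k (mem_range.mp hk).le]
    ring
  have expand := sum_pow_mul_sum_powersetCard_eq_prod_one_add (range m) 2
    fun k : ℕ => (α - 1) / (2 - α + k)
  rw [card_range, prod_congr rfl factor, prod_div_distrib] at expand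
  simp only [tsum_ite_strictMono_prod_eq_sum_powersetCard _ m fun k : ℕ => (α - 1) / (2 - α + k)]
  rw [expand, ascPochhammer_eval_eq_prod_range, ascPochhammer_eval_eq_prod_range, prod_range_succ]
  have hm := h m le_rfl
  have hprod : ∏ k ∈ range m, (2 - α + k) ≠ 0 :=
    prod_ne_zero_iff.mpr fun k hk => h k (mem_range.mp hk).le
  field_simp
end
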